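/- arXiv:1603.08271 — 2 statements merged into one kernel-verified Lean document; each statement's English description precedes it below -/
import Mathlib

section
/- For every ε > 0, the function ξ ↦ (1+ξ²)^{ε/2} · (1+ξ²)^{-1/4} (1 + log(1+ξ²))^{-2} does not belong to L²(ℝ); that is, ∫_ℝ (1+ξ²)^{ε - 1/2} (1 + log(1+ξ²))^{-4} dξ = ∞. -/
/-!
Since `log u ≤ u ^ a / a` for every `a > 0`, the logarithmic factor costs less than any power:
`(1 + log u) ^ p ≤ (1 + p / ε) ^ p * u ^ ε` for `u ≥ 1`. Hence the integrand dominates a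
multiple of `(1 + ξ ^ 2) ^ (-1/2)`, which behaves like `ξ⁻¹` at infinity and so is not integrable.
-/

open MeasureTheory Real Set

theorem one_add_log_rpow_le_mul_rpow {u p ε : ℝ} (hu : 1 ≤ u) (hp : 0 < p) (hε : 0 < ε) :
    (1 + log u) ^ p ≤ (1 + p / ε) ^ p * u ^ ε := by
  have hεp : 0 < ε / p := div_pos hε hp
  have hlog : 1 + log u ≤ (1 + p / ε) * u ^ (ε / p) := by
    have hlog_le : log u ≤ p / ε * u ^ (ε / p) := by
      calc log u ≤ u ^ (ε / p) / (ε / p) := log_le_rpow_div (zero_le_one.trans hu) hεp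
        _ = p / ε * u ^ (ε / p) := by field_simp
    linarith [one_le_rpow hu hεp.le, hlog_le]
  calc (1 + log u) ^ p ≤ ((1 + p / ε) * u ^ (ε / p)) ^ p :=
        rpow_le_rpow (by linarith [log_nonneg hu]) hlog hp.le
    _ = (1 + p / ε) ^ p * u ^ ε := by
        rw [mul_rpow (by positivity) (by positivity), ← rpow_mul (by linarith),
          div_mul_cancel₀ _ hp.ne']

theorem rpow_le_mul_rpow_add_mul_one_add_log_rpow_neg {u p ε : ℝ} (hu : 1 ≤ u) (hp : 0 < p)
    (hε : 0 < ε) (a : ℝ) :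
    u ^ a ≤ (1 + p / ε) ^ p * (u ^ (a + ε) * (1 + log u) ^ (-p)) := by
  have hu0 : 0 < u := zero_lt_one.trans_le hu
  have hL : 0 < (1 + log u) ^ p := rpow_pos_of_pos (by linarith [log_nonneg hu]) p
  have hratio : 1 ≤ (1 + p / ε) ^ p * u ^ ε * ((1 + log u) ^ p)⁻¹ := by
    rw [← div_eq_mul_inv, one_le_div hL]
    exact one_add_log_rpow_le_mul_rpow hu hp hε
  rw [rpow_add hu0, rpow_neg (by linarith [log_nonneg hu])]
  calc u ^ a = u ^ a * 1 := (mul_one _).symm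
    _ ≤ u ^ a * ((1 + p / ε) ^ p * u ^ ε * ((1 + log u) ^ p)⁻¹) :=
        mul_le_mul_of_nonneg_left hratio (rpow_nonneg hu0.le a)
    _ = _ := by ring

theorem not_integrable_one_add_sq_rpow_neg_half :
    ¬ Integrable (fun x : ℝ => (1 + x ^ 2) ^ (-(1 / 2) : ℝ)) := by
  intro h
  refine not_integrableOn_Ioi_inv (a := 1)
    ((h.integrableOn.const_mul 2).mono' measurable_inv.aestronglyMeasurable ?_)
  filter_upwards [ae_restrict_mem measurableSet_Ioi] with x (hx : 1 < x)
  have hsqrt : √(1 + x ^ 2) ≤ 2 * x := sqrt_le_iff.mpr ⟨by linarith, by nlinarith⟩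
  rw [norm_inv, Real.norm_of_nonneg (by linarith), rpow_neg (by positivity), ← sqrt_eq_rpow,
    ← div_eq_mul_inv, le_div_iff₀ (by positivity), inv_mul_le_iff₀ (by linarith)]
  linarith

theorem lambda_eps_eta_not_L2 (ε : ℝ) (hε : 0 < ε) :
    ¬ Integrable (fun ξ : ℝ =>
      (1 + ξ ^ 2) ^ (ε - 1 / 2) * (1 + Real.log (1 + ξ ^ 2)) ^ (-(4 : ℝ))) := by
  intro hf
  apply not_integrable_one_add_sq_rpow_neg_half
  refine (hf.const_mul ((1 + 4 / ε) ^ (4 : ℝ))).mono'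
    (by fun_prop : Measurable _).aestronglyMeasurable (ae_of_all _ fun ξ => ?_)
  have hξ : 1 ≤ 1 + ξ ^ 2 := le_add_of_nonneg_right (sq_nonneg ξ)
  rw [Real.norm_of_nonneg (rpow_nonneg (by positivity) _)]
  simpa only [neg_add_eq_sub] using
    rpow_le_mul_rpow_add_mul_one_add_log_rpow_neg hξ (by norm_num : (0 : ℝ) < 4) hε (-(1 / 2))
end

section
/- Let ε ∈ (0, 1/2], m ≥ 1, and let C₁ > 0, T > 0. For ξ ≥ M and x ≤ -1, suppose |D(ξ)| ≥ max(C₁ ξ^{2m} T + |x|, 1) and consider h(ξ) = ((1+ξ²)^{ε/2} χ(ξ)) / (D(ξ) (1+ξ²)^{1/4} (1+log(1+ξ²))²) where χ : ℝ → [0,1] is C^∞ with |χ'| ≤ K uniformly. Then |h'(ξ)|, after using |D'(ξ)| ≤ C₃ ξ^{2m-1} T, is bounded by C/(ξ^{2m} + 1) with C independent of the cutoff parameter, and hence ∫_M^∞ |h'(ξ)| dξ ≤ C' < ∞ uniformly. -/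
open MeasureTheory Real

/-! The weight `(1+ξ²)^{ε/2}` and the factors `D`, `(1+ξ²)^{1/4}`, `(1+log(1+ξ²))²` of
the denominator all have logarithmic derivatives bounded on `[M, ∞)`: by `|ε/2|`, `C₃/C₁`, `1/4`
and `2`, using `|2ξ| ≤ 1 + ξ²` and `ξ^{2m-1} ≤ ξ^{2m}`. The quotient rule, with `|χ| ≤ 1` and
`|χ'| ≤ K`, then bounds the derivative of the amplitude by a constant times
`(1+ξ²)^{ε/2} / |denominator|`, and `ε ≤ 1/2` makes this at most a constant over `|D(ξ)|`, hence
over `ξ^{2m} + 1`. That bound does not depend on the cutoff and is integrable on `(M, ∞)`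
because `2m > 1`. -/

def HasLogDerivBound (f : ℝ → ℝ) (c x : ℝ) : Prop :=
  ∃ f', HasDerivAt f f' x ∧ |f'| ≤ c * |f x|

namespace HasLogDerivBound

variable {f g : ℝ → ℝ} {a b x : ℝ}

theorem mul (hf : HasLogDerivBound f a x) (hg : HasLogDerivBound g b x) :
    HasLogDerivBound (fun y => f y * g y) (a + b) x := by
  obtain ⟨f', hf, hf'⟩ := hf
  obtain ⟨g', hg, hg'⟩ := hg
  refine ⟨f' * g x + f x * g', hf.mul hg, ?_⟩
  calc |f' * g x + f x * g'| ≤ |f'| * |g x| + |f x| * |g'| := by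
        simpa only [abs_mul] using abs_add_le (f' * g x) (f x * g')
    _ ≤ a * |f x| * |g x| + |f x| * (b * |g x|) := by gcongr
    _ = (a + b) * |f x * g x| := by rw [abs_mul]; ring

theorem abs_deriv_mul_div_le {χ : ℝ → ℝ} {χ' K : ℝ} (hf : HasLogDerivBound f a x)
    (hχ : HasDerivAt χ χ' x) (hχ₁ : |χ x| ≤ 1) (hχ' : |χ'| ≤ K)
    (hg : HasLogDerivBound g b x) (hg₀ : g x ≠ 0) :
    |deriv (fun y => f y * χ y / g y) x| ≤ (a + K + b) * |f x| / |g x| := by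
  obtain ⟨f', hf, hf'⟩ := hf
  obtain ⟨g', hg, hg'⟩ := hg
  have hquot : HasDerivAt (fun y => f y * χ y / g y)
      (((f' * χ x + f x * χ') * g x - f x * χ x * g') / g x ^ 2) x := (hf.mul hχ).div hg hg₀
  rw [hquot.deriv, abs_div, abs_pow, sq_abs,
    div_le_div_iff₀ (by positivity) (by positivity)]
  have hf'₀ : 0 ≤ a * |f x| := (abs_nonneg _).trans hf'
  have hnum : |f' * χ x + f x * χ'| ≤ (a + K) * |f x| := by
    calc |f' * χ x + f x * χ'| ≤ |f'| * |χ x| + |f x| * |χ'| := by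
          simpa only [abs_mul] using abs_add_le (f' * χ x) (f x * χ')
      _ ≤ a * |f x| * 1 + |f x| * K := by gcongr
      _ = (a + K) * |f x| := by ring
  calc |(f' * χ x + f x * χ') * g x - f x * χ x * g'| * |g x|
      ≤ (|f' * χ x + f x * χ'| * |g x| + |f x| * |χ x| * |g'|) * |g x| := by
        gcongr
        simpa only [abs_mul] using abs_sub (_ * g x) (f x * χ x * g')
    _ ≤ ((a + K) * |f x| * |g x| + |f x| * 1 * (b * |g x|)) * |g x| := by gcongr
    _ = (a + K + b) * |f x| * g x ^ 2 := by rw [← sq_abs (g x)]; ring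

end HasLogDerivBound

theorem abs_two_mul_le_one_add_sq (ξ : ℝ) : |2 * ξ| ≤ 1 + ξ ^ 2 := by
  rw [abs_le]
  constructor <;> nlinarith [sq_nonneg (ξ - 1), sq_nonneg (ξ + 1)]

theorem hasDerivAt_one_add_sq (ξ : ℝ) : HasDerivAt (fun ζ : ℝ => 1 + ζ ^ 2) (2 * ξ) ξ := by
  simpa using (hasDerivAt_pow 2 ξ).const_add 1

theorem hasLogDerivBound_one_add_sq_rpow (a ξ : ℝ) :
    HasLogDerivBound (fun ζ => (1 + ζ ^ 2) ^ a) |a| ξ := by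
  have hu : (0 : ℝ) < 1 + ξ ^ 2 := by positivity
  refine ⟨_, (hasDerivAt_one_add_sq ξ).rpow_const (Or.inl hu.ne'), ?_⟩
  rw [rpow_sub_one hu.ne', abs_of_pos (rpow_pos_of_pos hu a)]
  calc |2 * ξ * a * ((1 + ξ ^ 2) ^ a / (1 + ξ ^ 2))|
      = |a| * (1 + ξ ^ 2) ^ a * (|2 * ξ| / (1 + ξ ^ 2)) := by
        rw [abs_mul, abs_mul, abs_div, abs_of_pos hu, abs_of_pos (rpow_pos_of_pos hu a)]
        ring
    _ ≤ |a| * (1 + ξ ^ 2) ^ a * 1 := by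
        gcongr; exact (div_le_one hu).2 (abs_two_mul_le_one_add_sq ξ)
    _ = |a| * (1 + ξ ^ 2) ^ a := mul_one _

theorem hasLogDerivBound_one_add_log_one_add_sq_sq (ξ : ℝ) :
    HasLogDerivBound (fun ζ => (1 + log (1 + ζ ^ 2)) ^ 2) 2 ξ := by
  have hu : (0 : ℝ) < 1 + ξ ^ 2 := by positivity
  have hℓ : 1 ≤ 1 + log (1 + ξ ^ 2) := by
    linarith [log_nonneg (le_add_of_nonneg_right (sq_nonneg ξ))]
  have hL : HasDerivAt (fun ζ => (1 + log (1 + ζ ^ 2)) ^ 2)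
      (2 * (1 + log (1 + ξ ^ 2)) * (2 * ξ / (1 + ξ ^ 2))) ξ :=
    ((((hasDerivAt_one_add_sq ξ).log hu.ne').const_add 1).fun_pow 2).congr_deriv (by norm_num)
  refine ⟨_, hL, ?_⟩
  rw [abs_of_nonneg (by positivity : 0 ≤ (1 + log (1 + ξ ^ 2)) ^ 2)]
  calc |2 * (1 + log (1 + ξ ^ 2)) * (2 * ξ / (1 + ξ ^ 2))|
      = 2 * (1 + log (1 + ξ ^ 2)) * (|2 * ξ| / (1 + ξ ^ 2)) := by
        rw [abs_mul, abs_mul, abs_div, abs_of_pos hu, abs_two,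
          abs_of_pos (by linarith : 0 < 1 + log (1 + ξ ^ 2))]
    _ ≤ 2 * (1 + log (1 + ξ ^ 2)) * 1 := by
        gcongr; exact (div_le_one hu).2 (abs_two_mul_le_one_add_sq ξ)
    _ ≤ 2 * (1 + log (1 + ξ ^ 2)) ^ 2 := by nlinarith

theorem abs_deriv_amplitude_le {ε e K ξ : ℝ} {D χ : ℝ → ℝ} (hε : ε ≤ 1 / 2)
    (hD : HasLogDerivBound D e ξ) (he : 0 ≤ e) (hD₀ : D ξ ≠ 0)
    (hχ : DifferentiableAt ℝ χ ξ) (hχ₁ : |χ ξ| ≤ 1) (hχ' : |deriv χ ξ| ≤ K) :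
    |deriv (fun ζ => (1 + ζ ^ 2) ^ (ε / 2) * χ ζ /
        (D ζ * (1 + ζ ^ 2) ^ (1 / 4 : ℝ) * (1 + log (1 + ζ ^ 2)) ^ 2)) ξ|
      ≤ (|ε / 2| + K + e + 9 / 4) / |D ξ| := by
  have hu : (1 : ℝ) ≤ 1 + ξ ^ 2 := le_add_of_nonneg_right (sq_nonneg ξ)
  have hA : (1 + ξ ^ 2) ^ (ε / 2) ≤ (1 + ξ ^ 2) ^ (1 / 4 : ℝ) :=
    rpow_le_rpow_of_exponent_le hu (by linarith)
  have hP : 0 < (1 + ξ ^ 2) ^ (1 / 4 : ℝ) := by positivity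
  have hL : 1 ≤ (1 + log (1 + ξ ^ 2)) ^ 2 := one_le_pow₀ (by linarith [log_nonneg hu])
  have hK : 0 ≤ K := (abs_nonneg _).trans hχ'
  have hg := (hD.mul (hasLogDerivBound_one_add_sq_rpow (1 / 4) ξ)).mul
    (hasLogDerivBound_one_add_log_one_add_sq_sq ξ)
  have hweight : |(1 + ξ ^ 2) ^ (ε / 2)| /
      |D ξ * (1 + ξ ^ 2) ^ (1 / 4 : ℝ) * (1 + log (1 + ξ ^ 2)) ^ 2| ≤ 1 / |D ξ| := by
    rw [div_le_div_iff₀ (by positivity) (by positivity), one_mul, abs_mul, abs_mul,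
      abs_of_pos hP, abs_of_pos (by positivity : (0 : ℝ) < (1 + log (1 + ξ ^ 2)) ^ 2),
      abs_of_pos (by positivity : (0 : ℝ) < (1 + ξ ^ 2) ^ (ε / 2))]
    calc (1 + ξ ^ 2) ^ (ε / 2) * |D ξ| ≤ (1 + ξ ^ 2) ^ (1 / 4 : ℝ) * 1 * |D ξ| := by
          rw [mul_one]; gcongr
      _ ≤ (1 + ξ ^ 2) ^ (1 / 4 : ℝ) * (1 + log (1 + ξ ^ 2)) ^ 2 * |D ξ| := by gcongr
      _ = |D ξ| * (1 + ξ ^ 2) ^ (1 / 4 : ℝ) * (1 + log (1 + ξ ^ 2)) ^ 2 := by ring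
  calc _ ≤ (|ε / 2| + K + (e + |1 / 4| + 2)) * |(1 + ξ ^ 2) ^ (ε / 2)| /
        |D ξ * (1 + ξ ^ 2) ^ (1 / 4 : ℝ) * (1 + log (1 + ξ ^ 2)) ^ 2| :=
        HasLogDerivBound.abs_deriv_mul_div_le (hasLogDerivBound_one_add_sq_rpow (ε / 2) ξ)
          hχ.hasDerivAt hχ₁ hχ' hg (by positivity)
    _ ≤ (|ε / 2| + K + (e + |1 / 4| + 2)) * (1 / |D ξ|) := by
        rw [mul_div_assoc]; gcongr
    _ = (|ε / 2| + K + e + 9 / 4) / |D ξ| := by norm_num; ring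

theorem min_mul_add_one_le_two_mul {a X y d : ℝ} (hX : 0 ≤ X) (hy : 0 ≤ y)
    (h : max (a * X + y) 1 ≤ d) : min a 1 * (X + 1) ≤ 2 * d := by
  have h₁ := (le_max_left _ _).trans h
  have h₂ := (le_max_right _ _).trans h
  have : min a 1 * X ≤ a * X := mul_le_mul_of_nonneg_right (min_le_left a 1) hX
  linarith [min_le_right a 1]

theorem le_div_mul_of_le_rpow_sub_one {a b p q r T ξ : ℝ} (hξ : 1 ≤ ξ) (ha : 0 ≤ a)
    (hb : 0 < b) (hT : 0 ≤ T) (hq : q ≤ a * ξ ^ (p - 1) * T) (hr : b * ξ ^ p * T ≤ r) :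
    q ≤ a / b * r :=
  calc q ≤ a * ξ ^ (p - 1) * T := hq
    _ ≤ a * ξ ^ p * T := by gcongr; linarith
    _ = a / b * (b * ξ ^ p * T) := by field_simp
    _ ≤ a / b * r := by gcongr

theorem integrableOn_Ioi_div_rpow_add_one {p M : ℝ} (hp : 1 < p) (hM : 0 < M) (C : ℝ) :
    IntegrableOn (fun ξ => C / (ξ ^ p + 1)) (Set.Ioi M) := by
  have hdom : IntegrableOn (fun ξ : ℝ => ξ ^ (-p)) (Set.Ioi M) :=
    integrableOn_Ioi_rpow_of_lt (by linarith) hM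
  simp_rw [div_eq_mul_inv C]
  refine Integrable.const_mul (hdom.mono' ?_ ?_) C
  · exact (by fun_prop : Measurable fun ξ : ℝ => (ξ ^ p + 1)⁻¹).aestronglyMeasurable
  refine (ae_restrict_iff' measurableSet_Ioi).2 (ae_of_all _ fun ξ hξ => ?_)
  have hξ : 0 < ξ := hM.trans hξ
  rw [rpow_neg hξ.le, norm_inv, Real.norm_of_nonneg (by positivity)]
  exact inv_anti₀ (by positivity) (by linarith)

theorem exists_lintegral_le_of_abs_le_div_rpow_add_one {p M C : ℝ} (hp : 1 < p) (hM : 0 < M)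
    (hC : 0 ≤ C) : ∃ C' : ℝ, ∀ g : ℝ → ℝ, (∀ ξ, M ≤ ξ → |g ξ| ≤ C / (ξ ^ p + 1)) →
      ∫⁻ ξ in Set.Ioi M, ENNReal.ofReal |g ξ| ≤ ENNReal.ofReal C' := by
  refine ⟨∫ ξ in Set.Ioi M, C / (ξ ^ p + 1), fun g hg => ?_⟩
  rw [ofReal_integral_eq_lintegral_ofReal (integrableOn_Ioi_div_rpow_add_one hp hM C)]
  · exact setLIntegral_mono (by fun_prop) fun ξ hξ => ENNReal.ofReal_le_ofReal (hg ξ hξ.out.le)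
  · exact (ae_restrict_iff' measurableSet_Ioi).2 (ae_of_all _ fun ξ hξ =>
      div_nonneg hC (by have := (hM.trans hξ).le; positivity))

theorem amplitude_derivative_uniform_bound_general
    (ε m C₁ C₃ T K M x : ℝ)
    (hε' : ε ≤ 1 / 2) (hm : 1 ≤ m)
    (hC₁ : 0 < C₁) (hC₃ : 0 < C₃) (hT : 0 < T) (hM : 1 ≤ M)
    (D D' : ℝ → ℝ) (hD : ∀ ξ : ℝ, HasDerivAt D (D' ξ) ξ)
    (hDlow : ∀ ξ : ℝ, M ≤ ξ → max (C₁ * ξ ^ (2 * m) * T + |x|) 1 ≤ |D ξ|)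
    (hD'bd : ∀ ξ : ℝ, M ≤ ξ → |D' ξ| ≤ C₃ * ξ ^ (2 * m - 1) * T)
    (χ : ℕ → ℝ → ℝ) (hχ : ∀ n, ContDiff ℝ 1 (χ n))
    (hχ01 : ∀ n ξ, 0 ≤ χ n ξ ∧ χ n ξ ≤ 1)
    (hχ' : ∀ n ξ, |deriv (χ n) ξ| ≤ K) :
    ∃ C : ℝ, 0 < C ∧
      (∀ n : ℕ, ∀ ξ : ℝ, M ≤ ξ →
        |deriv (fun ζ : ℝ => (1 + ζ ^ 2) ^ (ε / 2) * χ n ζ /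
            (D ζ * (1 + ζ ^ 2) ^ (1 / 4 : ℝ) * (1 + Real.log (1 + ζ ^ 2)) ^ 2)) ξ|
          ≤ C / (ξ ^ (2 * m) + 1)) ∧
      ∃ C' : ℝ, ∀ n : ℕ,
        (∫⁻ ξ in Set.Ioi M, ENNReal.ofReal
          |deriv (fun ζ : ℝ => (1 + ζ ^ 2) ^ (ε / 2) * χ n ζ /
            (D ζ * (1 + ζ ^ 2) ^ (1 / 4 : ℝ) * (1 + Real.log (1 + ζ ^ 2)) ^ 2)) ξ|)
          ≤ ENNReal.ofReal C' := by
  set c := |ε / 2| + K + C₃ / C₁ + 9 / 4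
  have hc : 0 < c := by have := (abs_nonneg _).trans (hχ' 0 0); positivity
  have hc₀ : 0 < min (C₁ * T) 1 := lt_min (by positivity) one_pos
  have hbound : ∀ n ξ, M ≤ ξ →
      |deriv (fun ζ : ℝ => (1 + ζ ^ 2) ^ (ε / 2) * χ n ζ /
          (D ζ * (1 + ζ ^ 2) ^ (1 / 4 : ℝ) * (1 + log (1 + ζ ^ 2)) ^ 2)) ξ|
        ≤ 2 * c / min (C₁ * T) 1 / (ξ ^ (2 * m) + 1) := by
    intro n ξ hξ
    have hξ₁ : 1 ≤ ξ := hM.trans hξ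
    have hmax := hDlow ξ hξ
    have hD₀ : D ξ ≠ 0 := abs_pos.mp (one_pos.trans_le ((le_max_right _ _).trans hmax))
    have hD' : |D' ξ| ≤ C₃ / C₁ * |D ξ| :=
      le_div_mul_of_le_rpow_sub_one hξ₁ hC₃.le hC₁ hT.le (hD'bd ξ hξ)
        ((le_add_of_nonneg_right (abs_nonneg x)).trans ((le_max_left _ _).trans hmax))
    rw [mul_right_comm] at hmax
    have hlow := min_mul_add_one_le_two_mul (by positivity) (abs_nonneg x) hmax
    have hχ₁ : |χ n ξ| ≤ 1 := (abs_of_nonneg (hχ01 n ξ).1).le.trans (hχ01 n ξ).2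
    calc _ ≤ c / |D ξ| := abs_deriv_amplitude_le hε' ⟨D' ξ, hD ξ, hD'⟩ (by positivity) hD₀
          ((hχ n).differentiable one_ne_zero ξ) hχ₁ (hχ' n ξ)
      _ = 2 * c / (2 * |D ξ|) := by rw [mul_div_mul_left _ _ two_ne_zero]
      _ ≤ 2 * c / (min (C₁ * T) 1 * (ξ ^ (2 * m) + 1)) := by gcongr
      _ = 2 * c / min (C₁ * T) 1 / (ξ ^ (2 * m) + 1) := by rw [div_div]
  obtain ⟨C', hC'⟩ := exists_lintegral_le_of_abs_le_div_rpow_add_one (p := 2 * m) (by linarith)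
    (by linarith : 0 < M) (by positivity : 0 ≤ 2 * c / min (C₁ * T) 1)
  exact ⟨2 * c / min (C₁ * T) 1, by positivity, hbound, C', fun n => hC' _ (hbound n)⟩

/-- Uniform bound on the derivative of the amplitude in the dispersive case: with
`|D(ξ)| ≥ max(C₁ ξ^{2m} T + |x|, 1)`, `|D'(ξ)| ≤ C₃ ξ^{2m-1} T` for `ξ ≥ M`, cutoffs
`χ_n : ℝ → [0,1]` with `|χ_n'| ≤ K` uniformly, and
`h_n(ξ) = (1+ξ²)^{ε/2} χ_n(ξ) / (D(ξ)(1+ξ²)^{1/4}(1+log(1+ξ²))²)`, the derivatives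
`h_n'` are bounded by `C/(ξ^{2m}+1)` uniformly in `n` and hence uniformly integrable on
`(M,∞)`. -/
theorem amplitude_derivative_uniform_bound
    (ε m C₁ C₃ T K M x : ℝ)
    (hε : 0 < ε) (hε' : ε ≤ 1 / 2) (hm : 1 ≤ m)
    (hC₁ : 0 < C₁) (hC₃ : 0 < C₃) (hT : 0 < T) (hK : 0 < K) (hM : 1 ≤ M)
    (hx : x ≤ -1)
    (D D' : ℝ → ℝ) (hD : ∀ ξ : ℝ, HasDerivAt D (D' ξ) ξ)
    (hDlow : ∀ ξ : ℝ, M ≤ ξ → max (C₁ * ξ ^ (2 * m) * T + |x|) 1 ≤ |D ξ|)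
    (hD'bd : ∀ ξ : ℝ, M ≤ ξ → |D' ξ| ≤ C₃ * ξ ^ (2 * m - 1) * T)
    (χ : ℕ → ℝ → ℝ) (hχ : ∀ n, ContDiff ℝ 1 (χ n))
    (hχ01 : ∀ n ξ, 0 ≤ χ n ξ ∧ χ n ξ ≤ 1)
    (hχ' : ∀ n ξ, |deriv (χ n) ξ| ≤ K) :
    ∃ C : ℝ, 0 < C ∧
      (∀ n : ℕ, ∀ ξ : ℝ, M ≤ ξ →
        |deriv (fun ζ : ℝ => (1 + ζ ^ 2) ^ (ε / 2) * χ n ζ /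
            (D ζ * (1 + ζ ^ 2) ^ (1 / 4 : ℝ) * (1 + Real.log (1 + ζ ^ 2)) ^ 2)) ξ|
          ≤ C / (ξ ^ (2 * m) + 1)) ∧
      ∃ C' : ℝ, ∀ n : ℕ,
        (∫⁻ ξ in Set.Ioi M, ENNReal.ofReal
          |deriv (fun ζ : ℝ => (1 + ζ ^ 2) ^ (ε / 2) * χ n ζ /
            (D ζ * (1 + ζ ^ 2) ^ (1 / 4 : ℝ) * (1 + Real.log (1 + ζ ^ 2)) ^ 2)) ξ|)
          ≤ ENNReal.ofReal C' :=
  amplitude_derivative_uniform_bound_general ε m C₁ C₃ T K M x hε' hm hC₁ hC₃ hT hM D D' hD hDlow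
    hD'bd χ hχ hχ01 hχ'
end
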